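/- arXiv:2508.00431 — 2 statements merged into one kernel-verified Lean document; each statement's English description precedes it below -/
import Mathlib

section
/- Let A be an AUF algebra, and let e, f ∈ A be idempotents with e ≤ f and e a generating idempotent of A. Then e is a generating idempotent of the unital finite-dimensional algebra fAf: there exist pairwise orthogonal primitive idempotents ε₁, …, ε_n of fAf with e = ε₁ + ⋯ + ε_n such that every primitive idempotent of fAf is equivalent in fAf to some ε_k. -/
open scoped BigOperators

universe u v

section BasicDefs

variable (R : Type u)

section MulOnly
variable [NonUnitalRing R]

/-- An idempotent element. -/
def IsIdem (e : R) : Prop := e * e = e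

/-- Two idempotents are orthogonal. -/
def OrthIdem (e f : R) : Prop := e * f = 0 ∧ f * e = 0

/-- `f ≤ e` for idempotents: `f * e = f` and `e * f = f`. -/
def SubIdem (f e : R) : Prop := f * e = f ∧ e * f = f

/-- A primitive idempotent. -/
def IsPrimIdem (e : R) : Prop :=
  IsIdem R e ∧ e ≠ 0 ∧ ∀ f : R, IsIdem R f → SubIdem R f e → f = 0 ∨ f = e

/-- Equivalence of idempotents: partial isometries `u ∈ eRf`, `v ∈ fRe` with
`u * v = e`, `v * u = f`. -/
def IdemEquiv (e f : R) : Prop :=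
  ∃ u v : R, e * u * f = u ∧ f * v * e = v ∧ u * v = e ∧ v * u = f

/-- A generating idempotent: it has a finite orthogonal primitive decomposition
    such that every primitive idempotent is equivalent to a member of it. -/
def IsGenIdem (e : R) : Prop :=
  IsIdem R e ∧ ∃ (n : ℕ) (ε : Fin n → R),
    (∀ k, IsPrimIdem R (ε k)) ∧ (∀ k l, k ≠ l → OrthIdem R (ε k) (ε l)) ∧
    e = ∑ k, ε k ∧ ∀ p : R, IsPrimIdem R p → ∃ k, IdemEquiv R p (ε k)

/-- An idempotent of the corner algebra `fRf`. -/
def IsIdemIn (f e : R) : Prop := IsIdem R e ∧ f * e * f = e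

/-- A primitive idempotent of the corner algebra `fRf`. -/
def IsPrimIdemIn (f e : R) : Prop :=
  IsIdemIn R f e ∧ e ≠ 0 ∧ ∀ g : R, IsIdemIn R f g → SubIdem R g e → g = 0 ∨ g = e

/-- Equivalence of idempotents within the corner algebra `fRf`. -/
def IdemEquivIn (f p q : R) : Prop :=
  ∃ u v : R, f * u * f = u ∧ f * v * f = v ∧ p * u * q = u ∧ q * v * p = v ∧
    u * v = p ∧ v * u = q

/-- A generating idempotent of the corner algebra `fRf`. -/
def IsGenIdemIn (f e : R) : Prop :=
  IsIdemIn R f e ∧ ∃ (n : ℕ) (ε : Fin n → R),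
    (∀ k, IsPrimIdemIn R f (ε k)) ∧ (∀ k l, k ≠ l → OrthIdem R (ε k) (ε l)) ∧
    e = ∑ k, ε k ∧ ∀ p : R, IsPrimIdemIn R f p → ∃ k, IdemEquivIn R f p (ε k)

end MulOnly

section Subspaces
variable [NonUnitalRing R] [Module ℂ R] [SMulCommClass ℂ R R] [IsScalarTower ℂ R R]

/-- The subspace `Re = {x | x * e = x}`. -/
def subAe (e : R) : Submodule ℂ R where
  carrier := {x | x * e = x}
  add_mem' := by
    intro a b ha hb
    simp only [Set.mem_setOf_eq] at *
    rw [add_mul, ha, hb]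
  zero_mem' := by simp
  smul_mem' := by
    intro c x hx
    simp only [Set.mem_setOf_eq] at *
    rw [smul_mul_assoc, hx]

/-- The corner subspace `eRf = {x | e * x * f = x}`. -/
def subCorner (e f : R) : Submodule ℂ R where
  carrier := {x | e * x * f = x}
  add_mem' := by
    intro a b ha hb
    simp only [Set.mem_setOf_eq] at *
    rw [mul_add, add_mul, ha, hb]
  zero_mem' := by simp
  smul_mem' := by
    intro c x hx
    simp only [Set.mem_setOf_eq] at *
    rw [mul_smul_comm, smul_mul_assoc, hx]

/-- A symmetric linear functional. -/
def IsSLF (ψ : R →ₗ[ℂ] ℂ) : Prop := ∀ x y : R, ψ (x * y) = ψ (y * x)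

/-- Witness data for an AUF algebra: a family of pairwise orthogonal idempotents with
finite-dimensional corners spanning the algebra. -/
def IsAUFWitness {I : Type v} (E : I → R) : Prop :=
  (∀ i, IsIdem R (E i)) ∧ (∀ i j, i ≠ j → OrthIdem R (E i) (E j)) ∧
  (∀ i j, FiniteDimensional ℂ (subCorner R (E i) (E j))) ∧
  (⨆ i, ⨆ j, subCorner R (E i) (E j)) = ⊤

/-- An almost unital and finite-dimensional (AUF) algebra. -/
def IsAUF : Prop := ∃ (I : Type u) (E : I → R), IsAUFWitness R E

end Subspaces

end BasicDefs


section Aux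
variable {R : Type*} [NonUnitalRing R]

lemma absorb_left {f a b u : R} (hfa : f * a = a) (hu : a * u * b = u) : f * u = u := by
  conv_lhs => rw [← hu]
  rw [← mul_assoc, ← mul_assoc, hfa, hu]

lemma absorb_right {f a b u : R} (hbf : b * f = b) (hu : a * u * b = u) : u * f = u := by
  conv_lhs => rw [← hu]
  rw [mul_assoc, hbf, hu]

end Aux

lemma mem_subCorner {R : Type*} [NonUnitalRing R] [Module ℂ R] [SMulCommClass ℂ R R]
    [IsScalarTower ℂ R R] {e f x : R} : x ∈ subCorner R e f ↔ e * x * f = x := Iff.rfl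

/-- If `A` is AUF, `e ≤ f` are idempotents and `e` is a generating idempotent
of `A`, then `fAf` is finite-dimensional and `e` is a generating idempotent of the unital
algebra `fAf`. -/
theorem stmt_10 {A : Type u} [NonUnitalRing A] [Module ℂ A] [SMulCommClass ℂ A A]
    [IsScalarTower ℂ A A] (hA : IsAUF A) (e f : A) (he : IsIdem A e) (hf : IsIdem A f)
    (hef : SubIdem A e f) (hgen : IsGenIdem A e) :
    FiniteDimensional ℂ (subCorner A f f) ∧ IsGenIdemIn A f e := by
  obtain ⟨he2, n, ε, hprim, horth, hsum, hequiv⟩ := hgen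
  -- basic facts about the ε's
  have hεe : ∀ k, ε k * e = ε k := by
    intro k
    rw [hsum, Finset.mul_sum]
    rw [Finset.sum_eq_single k (fun l _ hlk => (horth k l (Ne.symm hlk)).1)
      (fun h => absurd (Finset.mem_univ k) h)]
    exact (hprim k).1
  have heε : ∀ k, e * ε k = ε k := by
    intro k
    rw [hsum, Finset.sum_mul]
    rw [Finset.sum_eq_single k (fun l _ hlk => (horth l k hlk).1)
      (fun h => absurd (Finset.mem_univ k) h)]
    exact (hprim k).1
  have hεf : ∀ k, ε k * f = ε k := by
    intro k
    conv_lhs => rw [← hεe k]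
    rw [mul_assoc, hef.1, hεe k]
  have hfε : ∀ k, f * ε k = ε k := by
    intro k
    conv_lhs => rw [← heε k]
    rw [← mul_assoc, hef.2, heε k]
  have hfp_of : ∀ p : A, f * p * f = p → f * p = p := fun p hp => absorb_left hf hp
  have hpf_of : ∀ p : A, f * p * f = p → p * f = p := fun p hp => absorb_right hf hp
  constructor
  · -- finite-dimensionality of fAf
    obtain ⟨I, E, hIdem, hOrth, hFD, hTop⟩ := hA
    have hf_mem : f ∈ ⨆ i, ⨆ j, subCorner A (E i) (E j) := by
      rw [hTop]; exact Submodule.mem_top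
    rw [← iSup_prod (f := fun p : I × I => subCorner A (E p.1) (E p.2))] at hf_mem
    rw [Submodule.mem_iSup_iff_exists_finsupp] at hf_mem
    obtain ⟨c, hc, hcsum⟩ := hf_mem
    set S := c.support with hS
    let V : Submodule ℂ A :=
      ⨆ q : {a // a ∈ S} × {a // a ∈ S}, subCorner A (E q.1.1.1) (E q.2.1.2)
    haveI : FiniteDimensional ℂ V := by
      apply Submodule.finiteDimensional_iSup
    have hle : subCorner A f f ≤ V := by
      intro x hx
      have hx' : f * x * f = x := hx
      rw [← hx', ← hcsum, Finsupp.sum, Finset.sum_mul, Finset.sum_mul]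
      refine Submodule.sum_mem V fun p hp => ?_
      rw [Finset.mul_sum]
      refine Submodule.sum_mem V fun q hq => ?_
      refine Submodule.mem_iSup_of_mem (⟨⟨p, hp⟩, ⟨q, hq⟩⟩ :
        {a // a ∈ S} × {a // a ∈ S}) ?_
      have h1 : E p.1 * c p = c p := absorb_left (hIdem p.1) (hc p)
      have h2 : c q * E q.2 = c q := absorb_right (hIdem q.2) (hc q)
      rw [mem_subCorner]
      have h3 : E p.1 * (c p * x * c q) = c p * x * c q := by
        rw [← mul_assoc, ← mul_assoc, h1]
      rw [h3, mul_assoc, h2]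
    exact Submodule.finiteDimensional_of_le hle
  · -- e is a generating idempotent of fAf
    refine ⟨⟨he, by rw [hef.2, hef.1]⟩, n, ε, ?_, horth, hsum, ?_⟩
    · intro k
      refine ⟨⟨(hprim k).1, by rw [hfε k, hεf k]⟩, (hprim k).2.1, ?_⟩
      intro g hg hsub
      exact (hprim k).2.2 g hg.1 hsub
    · intro p hp
      obtain ⟨⟨hpI, hpfp⟩, hpne, hpmin⟩ := hp
      have hfp : f * p = p := hfp_of p hpfp
      have hpf' : p * f = p := hpf_of p hpfp
      have hpprim : IsPrimIdem A p := by
        refine ⟨hpI, hpne, fun g hg hsub => ?_⟩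
        have hgpp : p * g * p = g := by rw [hsub.2, hsub.1]
        have hfg : f * g = g := absorb_left hfp hgpp
        have hgf : g * f = g := absorb_right hpf' hgpp
        exact hpmin g ⟨hg, by rw [hfg, hgf]⟩ hsub
      obtain ⟨k, u, v, hu, hv, huv, hvu⟩ := hequiv p hpprim
      refine ⟨k, u, v, ?_, ?_, hu, hv, huv, hvu⟩
      · rw [absorb_left hfp hu, absorb_right (hεf k) hu]
      · rw [absorb_left (hfε k) hv, absorb_right hpf' hv]
end

section
/- Let A be an AUF algebra and e ∈ A a generating idempotent. Then the restriction map ψ ↦ ψ|_{eAe} is a ℂ-linear bijection from SLF(A) onto SLF(eAe), where eAe = {x ∈ A : exe = x} is the (unital, finite-dimensional) corner algebra. -/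
open scoped BigOperators

universe u v

/-! Split each idempotent `E i` of an AUF family into orthogonal primitive idempotents `p`. Each
`p` is equivalent to a summand of `e`, hence factors as `p = u v` with `u ∈ A e` and `v ∈ e A`, and
these `p` form a locally finite partition of unity. A symmetric functional therefore satisfies the
trace formula `ψ x = ∑ₚ ψ (v x u)`, whose terms only involve `ψ` on `eAe`; conversely, for `φ`
symmetric on `eAe` the same (locally finite) sum `x ↦ ∑ₚ φ (v x u)` is symmetric on `A` and
restricts to `φ`. -/

open Function

section Idempotents

variable {R : Type*} [NonUnitalRing R]

lemma IsIdem.mul_eq_self_of_corner {e f x : R} (he : IsIdem R e) (hx : e * x * f = x) :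
    e * x = x := by
  rw [← hx, ← mul_assoc, ← mul_assoc, he]

lemma IsIdem.corner_mul_eq_self {e f x : R} (hf : IsIdem R f) (hx : e * x * f = x) :
    x * f = x := by
  rw [← hx, mul_assoc, hf]

lemma OrthIdem.symm {e f : R} (h : OrthIdem R e f) : OrthIdem R f e := ⟨h.2, h.1⟩

lemma SubIdem.mul_eq_zero {p q f g : R} (hp : SubIdem R p f) (hq : SubIdem R q g)
    (hfg : f * g = 0) : p * q = 0 := by
  rw [← hp.1, ← hq.2, mul_assoc, ← mul_assoc f, hfg, zero_mul, mul_zero]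

lemma SubIdem.mul_eq_self_left {f g x : R} (h : SubIdem R f g) (hx : f * x = x) :
    g * x = x := by
  rw [← hx, ← mul_assoc, h.2]

lemma SubIdem.mul_eq_self_right {f g x : R} (h : SubIdem R f g) (hx : x * f = x) :
    x * g = x := by
  rw [← hx, mul_assoc, h.1]

lemma subIdem_sum_of_mem {J : Type*} {P : J → R} {t : Finset J} {j : J}
    (horth : (t : Set J).Pairwise fun i k => OrthIdem R (P i) (P k)) (hj : j ∈ t)
    (hidem : IsIdem R (P j)) : SubIdem R (P j) (∑ i ∈ t, P i) := by
  constructor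
  · rw [Finset.mul_sum,
      Finset.sum_eq_single_of_mem j hj fun i hi hij => (horth hj hi hij.symm).1]
    exact hidem
  · rw [Finset.sum_mul,
      Finset.sum_eq_single_of_mem j hj fun i hi hij => (horth hi hj hij).1]
    exact hidem

lemma subIdem_sum_of_subset {J : Type*} {P : J → R} {s t : Finset J}
    (horth : (s : Set J).Pairwise fun i k => OrthIdem R (P i) (P k))
    (hidem : ∀ j ∈ s, IsIdem R (P j)) (hts : t ⊆ s) :
    SubIdem R (∑ j ∈ t, P j) (∑ j ∈ s, P j) := by
  constructor
  · rw [Finset.sum_mul]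
    exact Finset.sum_congr rfl fun j hj => (subIdem_sum_of_mem horth (hts hj) (hidem j (hts hj))).1
  · rw [Finset.mul_sum]
    exact Finset.sum_congr rfl fun j hj => (subIdem_sum_of_mem horth (hts hj) (hidem j (hts hj))).2

lemma mul_sum_eq_zero_of_notMem {J : Type*} {P : J → R} {t : Finset J} {j : J}
    (horth : Pairwise fun i k => P i * P k = 0) (hj : j ∉ t) : P j * ∑ i ∈ t, P i = 0 := by
  rw [Finset.mul_sum]
  exact Finset.sum_eq_zero fun i hi => horth (ne_of_mem_of_not_mem hi hj).symm

lemma sum_mul_eq_zero_of_notMem {J : Type*} {P : J → R} {t : Finset J} {j : J}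
    (horth : Pairwise fun i k => P i * P k = 0) (hj : j ∉ t) : (∑ i ∈ t, P i) * P j = 0 := by
  rw [Finset.sum_mul]
  exact Finset.sum_eq_zero fun i hi => horth (ne_of_mem_of_not_mem hi hj)

end Idempotents

section PrimitiveDecomposition

variable {R : Type*} [NonUnitalRing R]

def IsPrimDecomposition (s : Finset R) (e : R) : Prop :=
  (∀ p ∈ s, IsPrimIdem R p) ∧ (s : Set R).Pairwise (OrthIdem R) ∧ ∑ p ∈ s, p = e

lemma IsPrimDecomposition.subIdem {s : Finset R} {e p : R} (h : IsPrimDecomposition s e)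
    (hp : p ∈ s) : SubIdem R p e :=
  h.2.2 ▸ subIdem_sum_of_mem (P := id) h.2.1 hp (h.1 p hp).1

lemma IsPrimDecomposition.union [DecidableEq R] {s₁ s₂ : Finset R} {f g : R}
    (h₁ : IsPrimDecomposition s₁ f) (h₂ : IsPrimDecomposition s₂ g) (hfg : OrthIdem R f g) :
    IsPrimDecomposition (s₁ ∪ s₂) (f + g) := by
  have hcross : ∀ p ∈ s₁, ∀ q ∈ s₂, OrthIdem R p q := fun p hp q hq =>
    ⟨(h₁.subIdem hp).mul_eq_zero (h₂.subIdem hq) hfg.1,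
      (h₂.subIdem hq).mul_eq_zero (h₁.subIdem hp) hfg.2⟩
  have hdisj : Disjoint s₁ s₂ := Finset.disjoint_left.2 fun p hp₁ hp₂ =>
    (h₁.1 p hp₁).2.1 (by rw [← (h₁.1 p hp₁).1, (hcross p hp₁ p hp₂).1])
  refine ⟨fun p hp => ?_, ?_, by rw [Finset.sum_union hdisj, h₁.2.2, h₂.2.2]⟩
  · rcases Finset.mem_union.1 hp with hp | hp
    exacts [h₁.1 p hp, h₂.1 p hp]
  · rw [Finset.coe_union, Set.pairwise_union]
    exact ⟨h₁.2.1, h₂.2.1, fun p hp q hq _ => ⟨hcross p hp q hq, (hcross p hp q hq).symm⟩⟩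

variable [Module ℂ R] [SMulCommClass ℂ R R] [IsScalarTower ℂ R R]

lemma subCorner_lt_of_subIdem {e f : R} (he : IsIdem R e) (hf : IsIdem R f)
    (hfe : SubIdem R f e) (hne : f ≠ e) : subCorner R f f < subCorner R e e := by
  refine lt_of_le_of_ne (fun x (hx : f * x * f = x) => ?_) fun h => hne ?_
  · show e * x * e = x
    rw [← hx, ← mul_assoc, ← mul_assoc, hfe.2, mul_assoc, hfe.1]
  · have : e ∈ subCorner R f f := h ▸ (show e * e * e = e by rw [he, he])
    rw [← this, hfe.1, hf]

theorem exists_isPrimDecomposition {e : R} (he : IsIdem R e)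
    [FiniteDimensional ℂ (subCorner R e e)] : ∃ s : Finset R, IsPrimDecomposition s e := by
  classical
  induction hn : Module.finrank ℂ (subCorner R e e) using Nat.strong_induction_on
    generalizing e with
  | _ n ih =>
    by_cases hprim : IsPrimIdem R e
    · exact ⟨{e}, by simpa using hprim, by simp, by simp⟩
    by_cases he0 : e = 0
    · exact ⟨∅, by simp, by simp, by simp [he0]⟩
    obtain ⟨f, hf, hfe, hf0, hfe'⟩ : ∃ f, IsIdem R f ∧ SubIdem R f e ∧ f ≠ 0 ∧ f ≠ e := by
      simpa [IsPrimIdem, he, he0] using hprim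
    have hee : e * e = e := he
    have hff : f * f = f := hf
    have hg : IsIdem R (e - f) := by
      simp only [IsIdem, mul_sub, sub_mul, hee, hff, hfe.1, hfe.2, sub_self, sub_zero]
    have hge : SubIdem R (e - f) e := by
      constructor <;> simp only [mul_sub, sub_mul, hee, hfe.1, hfe.2]
    have hfg : OrthIdem R f (e - f) := by
      constructor <;> simp only [mul_sub, sub_mul, hff, hfe.1, hfe.2, sub_self]
    have hlt₁ := subCorner_lt_of_subIdem he hf hfe hfe'
    have hlt₂ := subCorner_lt_of_subIdem he hg hge fun h => hf0 (sub_eq_self.1 h)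
    have := Submodule.finiteDimensional_of_le hlt₁.le
    have := Submodule.finiteDimensional_of_le hlt₂.le
    obtain ⟨s₁, h₁⟩ := ih _ (hn ▸ Submodule.finrank_lt_finrank_of_lt hlt₁) hf rfl
    obtain ⟨s₂, h₂⟩ := ih _ (hn ▸ Submodule.finrank_lt_finrank_of_lt hlt₂) hg rfl
    exact ⟨s₁ ∪ s₂, add_sub_cancel f e ▸ h₁.union h₂ hfg⟩

end PrimitiveDecomposition

namespace LinearMap

variable {R M N J : Type*} [Semiring R] [AddCommMonoid M] [Module R M] [AddCommMonoid N]
  [Module R N]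

noncomputable def finsum (f : J → M →ₗ[R] N) (hf : ∀ x, HasFiniteSupport fun j => f j x) :
    M →ₗ[R] N where
  toFun x := ∑ᶠ j, f j x
  map_add' x y := by
    simp only [map_add]
    exact finsum_add_distrib (hf x) (hf y)
  map_smul' c x := by
    simp only [map_smul, RingHom.id_apply]
    exact (smul_finsum' c (hf x)).symm

lemma finsum_apply (f : J → M →ₗ[R] N) (hf : ∀ x, HasFiniteSupport fun j => f j x) (x : M) :
    finsum f hf x = ∑ᶠ j, f j x := rfl

end LinearMap

/-- `P j = u j * v j` factors through the corner `eAe`, and the `P j` form a locally finite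
orthogonal partition of unity. -/
structure TraceFrame {A : Type*} [NonUnitalRing A] (e : A) (J : Type*) where
  P : J → A
  u : J → A
  v : J → A
  pairwise_mul_eq_zero : Pairwise fun i j => P i * P j = 0
  exists_local_unit : ∀ x : A, ∃ t : Finset J, (∑ j ∈ t, P j) * x = x ∧ x * ∑ j ∈ t, P j = x
  u_mul_v : ∀ j, u j * v j = P j
  P_mul_u : ∀ j, P j * u j = u j
  v_mul_P : ∀ j, v j * P j = v j
  u_mul_e : ∀ j, u j * e = u j
  e_mul_v : ∀ j, e * v j = v j

namespace TraceFrame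

variable {A : Type*} [NonUnitalRing A] {e : A} {J : Type*} (F : TraceFrame e J)

lemma corner_v_mul_mul_u (i j : J) (x : A) :
    e * (F.v i * x * F.u j) * e = F.v i * x * F.u j := by
  rw [← mul_assoc, ← mul_assoc, F.e_mul_v, mul_assoc, F.u_mul_e]

lemma v_mul_mul_u_eq_zero_of_left {t : Finset J} {x : A} (hx : (∑ i ∈ t, F.P i) * x = x)
    {j : J} (hj : j ∉ t) : F.v j * x * F.u j = 0 := by
  rw [← hx, ← F.v_mul_P, mul_assoc (F.v j), ← mul_assoc (F.P j),
    mul_sum_eq_zero_of_notMem F.pairwise_mul_eq_zero hj, zero_mul, mul_zero, zero_mul]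

lemma v_mul_mul_u_eq_zero_of_right {t : Finset J} {x : A} (hx : x * ∑ i ∈ t, F.P i = x)
    {j : J} (hj : j ∉ t) : F.v j * x * F.u j = 0 := by
  rw [← hx, ← F.P_mul_u, mul_assoc, mul_assoc x, ← mul_assoc _ (F.P j),
    sum_mul_eq_zero_of_notMem F.pairwise_mul_eq_zero hj, zero_mul, mul_zero, mul_zero]

lemma mul_mul_mul_eq_sum_of_right {t : Finset J} {x : A} (hx : x * ∑ i ∈ t, F.P i = x)
    (a y b : A) : a * (x * y) * b = ∑ i ∈ t, (a * x * F.u i) * (F.v i * y * b) := by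
  conv_lhs => rw [← hx]
  simp only [Finset.mul_sum, Finset.sum_mul, ← F.u_mul_v, mul_assoc]

lemma mul_mul_mul_eq_sum_of_left {t : Finset J} {x : A} (hx : (∑ i ∈ t, F.P i) * x = x)
    (a y b : A) : a * (y * x) * b = ∑ i ∈ t, (a * y * F.u i) * (F.v i * x * b) := by
  conv_lhs => rw [← hx]
  simp only [Finset.mul_sum, Finset.sum_mul, ← F.u_mul_v, mul_assoc]

variable {R M : Type*} [CommSemiring R] [Module R A] [SMulCommClass R A A] [IsScalarTower R A A]
  [AddCommMonoid M] [Module R M]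

lemma hasFiniteSupport (θ : A →ₗ[R] M) (x : A) :
    HasFiniteSupport fun j => (θ ∘ₗ LinearMap.mulLeftRight R (F.v j, F.u j)) x := by
  obtain ⟨t, hx, -⟩ := F.exists_local_unit x
  refine t.finite_toSet.subset fun j hj => ?_
  by_contra hjt
  exact hj (by simp [F.v_mul_mul_u_eq_zero_of_left hx hjt])

noncomputable def traceExtension (θ : A →ₗ[R] M) : A →ₗ[R] M :=
  LinearMap.finsum (fun j => θ ∘ₗ LinearMap.mulLeftRight R (F.v j, F.u j)) (F.hasFiniteSupport θ)

lemma traceExtension_apply (θ : A →ₗ[R] M) {t : Finset J} {x : A}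
    (ht : ∀ j ∉ t, F.v j * x * F.u j = 0) :
    F.traceExtension θ x = ∑ j ∈ t, θ (F.v j * x * F.u j) := by
  refine finsum_eq_finsetSum_of_support_subset _ fun j hj => ?_
  by_contra hjt
  exact hj (by simp [ht j hjt])

lemma traceExtension_eq_self {θ : A →ₗ[R] M} (hθ : ∀ x y, θ (x * y) = θ (y * x)) :
    F.traceExtension θ = θ := by
  ext x
  obtain ⟨t, hl, hr⟩ := F.exists_local_unit x
  rw [F.traceExtension_apply θ fun j => F.v_mul_mul_u_eq_zero_of_left hl]
  conv_rhs => rw [← hr]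
  simp only [Finset.mul_sum, map_sum, ← F.u_mul_v, ← mul_assoc]
  exact Finset.sum_congr rfl fun j _ => by rw [mul_assoc, hθ]

lemma traceExtension_congr {θ₁ θ₂ : A →ₗ[R] M} (h : ∀ x, e * x * e = x → θ₁ x = θ₂ x) :
    F.traceExtension θ₁ = F.traceExtension θ₂ := by
  ext x
  simp only [traceExtension, LinearMap.finsum_apply, LinearMap.comp_apply,
    LinearMap.mulLeftRight_apply, h _ (F.corner_v_mul_mul_u _ _ x)]

lemma traceExtension_mul_comm {θ : A →ₗ[R] M}
    (hθ : ∀ a b, e * a * e = a → e * b * e = b → θ (a * b) = θ (b * a)) (x y : A) :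
    F.traceExtension θ (x * y) = F.traceExtension θ (y * x) := by
  obtain ⟨t, hl, hr⟩ := F.exists_local_unit x
  have hxy : (∑ i ∈ t, F.P i) * (x * y) = x * y := by rw [← mul_assoc, hl]
  have hyx : y * x * ∑ i ∈ t, F.P i = y * x := by rw [mul_assoc, hr]
  rw [F.traceExtension_apply θ fun j => F.v_mul_mul_u_eq_zero_of_left hxy,
    F.traceExtension_apply θ fun j => F.v_mul_mul_u_eq_zero_of_right hyx]
  simp only [F.mul_mul_mul_eq_sum_of_right hr, F.mul_mul_mul_eq_sum_of_left hl, map_sum]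
  rw [Finset.sum_comm]
  exact Finset.sum_congr rfl fun i _ => Finset.sum_congr rfl fun j _ =>
    hθ _ _ (F.corner_v_mul_mul_u j i x) (F.corner_v_mul_mul_u i j y)

lemma traceExtension_apply_of_corner {θ : A →ₗ[R] M} (he : IsIdem A e)
    (hθ : ∀ a b, e * a * e = a → e * b * e = b → θ (a * b) = θ (b * a)) {x : A}
    (hx : e * x * e = x) : F.traceExtension θ x = θ x := by
  obtain ⟨t, hl, -⟩ := F.exists_local_unit x
  rw [F.traceExtension_apply θ fun j => F.v_mul_mul_u_eq_zero_of_left hl]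
  have hxe : x * e = x := he.corner_mul_eq_self hx
  have hex : e * x = x := he.mul_eq_self_of_corner hx
  -- `v x u = (v x) (e u)` with both factors in the corner; cycling them gives `e (u v) x`
  have hcycle : ∀ j, θ (F.v j * x * F.u j) = θ (e * F.P j * x) := fun j => by
    have h₁ : e * (F.v j * x) * e = F.v j * x := by rw [← mul_assoc, F.e_mul_v, mul_assoc, hxe]
    have h₂ : e * (e * F.u j) * e = e * F.u j := by rw [← mul_assoc, he, mul_assoc, F.u_mul_e]
    calc θ (F.v j * x * F.u j) = θ (F.v j * x * (e * F.u j)) := by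
          rw [← mul_assoc (F.v j * x), mul_assoc (F.v j) x e, hxe]
      _ = θ (e * F.u j * (F.v j * x)) := hθ _ _ h₁ h₂
      _ = θ (e * F.P j * x) := by rw [← F.u_mul_v]; simp only [mul_assoc]
  rw [Finset.sum_congr rfl fun j _ => hcycle j, ← map_sum, ← Finset.sum_mul, ← Finset.mul_sum,
    mul_assoc, hl, hex]

end TraceFrame

section Frame

variable {A : Type*} [NonUnitalRing A]

lemma exists_local_unit_of_iSup_eq_top [Module ℂ A] [SMulCommClass ℂ A A] [IsScalarTower ℂ A A]
    {I : Type*} {E : I → A} (hidem : ∀ i, IsIdem A (E i))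
    (horth : ∀ i j, i ≠ j → OrthIdem A (E i) (E j))
    (hspan : (⨆ i, ⨆ j, subCorner A (E i) (E j)) = ⊤) (x : A) :
    ∃ t : Finset I, (∑ i ∈ t, E i) * x = x ∧ x * ∑ i ∈ t, E i = x := by
  classical
  have hsub : ∀ {t s : Finset I}, t ⊆ s → SubIdem A (∑ k ∈ t, E k) (∑ k ∈ s, E k) :=
    subIdem_sum_of_subset (fun k _ l _ hkl => horth k l hkl) fun j _ => hidem j
  have hx : x ∈ ⨆ q : I × I, subCorner A (E q.1) (E q.2) := by
    rw [iSup_prod, hspan]; exact Submodule.mem_top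
  refine Submodule.iSup_induction _ hx
    (motive := fun y => ∃ t : Finset I, (∑ i ∈ t, E i) * y = y ∧ y * ∑ i ∈ t, E i = y)
    (fun q y hy => ?_) ⟨∅, by simp, by simp⟩
    fun y z ⟨t₁, hy₁, hy₂⟩ ⟨t₂, hz₁, hz₂⟩ => ?_
  · have hi := hsub (t := {q.1}) (s := {q.1, q.2}) (by simp)
    have hj := hsub (t := {q.2}) (s := {q.1, q.2}) (by simp)
    simp only [Finset.sum_singleton] at hi hj
    exact ⟨{q.1, q.2}, hi.mul_eq_self_left ((hidem _).mul_eq_self_of_corner hy),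
      hj.mul_eq_self_right ((hidem _).corner_mul_eq_self hy)⟩
  · have h₁ := hsub (Finset.subset_union_left (s₁ := t₁) (s₂ := t₂))
    have h₂ := hsub (Finset.subset_union_right (s₁ := t₁) (s₂ := t₂))
    exact ⟨t₁ ∪ t₂, by rw [mul_add, h₁.mul_eq_self_left hy₁, h₂.mul_eq_self_left hz₁],
      by rw [add_mul, h₁.mul_eq_self_right hy₂, h₂.mul_eq_self_right hz₂]⟩

lemma IsGenIdem.exists_factor {e p : A} (hgen : IsGenIdem A e) (hp : IsPrimIdem A p) :
    ∃ u v : A, u * v = p ∧ p * u = u ∧ v * p = v ∧ u * e = u ∧ e * v = v := by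
  obtain ⟨-, _, ε, hεprim, hεorth, rfl, hequiv⟩ := hgen
  obtain ⟨k, u, v, hu, hv, huv, -⟩ := hequiv p hp
  have hεe : SubIdem A (ε k) (∑ l, ε l) :=
    subIdem_sum_of_mem (fun l _ m _ h => hεorth l m h) (Finset.mem_univ k) (hεprim k).1
  exact ⟨u, v, huv, hp.1.mul_eq_self_of_corner hu, hp.1.corner_mul_eq_self hv,
    hεe.mul_eq_self_right ((hεprim k).1.corner_mul_eq_self hu),
    hεe.mul_eq_self_left ((hεprim k).1.mul_eq_self_of_corner hv)⟩

lemma pairwise_mul_eq_zero_sigma {I : Type*} {E : I → A} {s : I → Finset A}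
    (horth : ∀ i j, i ≠ j → OrthIdem A (E i) (E j)) (hs : ∀ i, IsPrimDecomposition (s i) (E i)) :
    Pairwise fun j k : (Σ i, s i) => (j.2 : A) * k.2 = 0 := by
  rintro ⟨i, p⟩ ⟨i', q⟩ hne
  by_cases hii : i = i'
  · subst hii
    exact ((hs i).2.1 p.2 q.2 fun h => hne (by rw [Subtype.ext h])).1
  · exact ((hs i).subIdem p.2).mul_eq_zero ((hs i').subIdem q.2) (horth i i' hii).1

lemma exists_local_unit_sigma {I : Type*} {E : I → A} {s : I → Finset A}
    (hE : ∀ x : A, ∃ t : Finset I, (∑ i ∈ t, E i) * x = x ∧ x * ∑ i ∈ t, E i = x)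
    (hs : ∀ i, IsPrimDecomposition (s i) (E i)) (x : A) :
    ∃ t : Finset (Σ i, s i), (∑ j ∈ t, (j.2 : A)) * x = x ∧ x * ∑ j ∈ t, (j.2 : A) = x := by
  obtain ⟨t, hl, hr⟩ := hE x
  have hsum : ∑ j ∈ t.sigma fun i => (Finset.univ : Finset (s i)), (j.2 : A) = ∑ i ∈ t, E i := by
    rw [Finset.sum_sigma]
    exact Finset.sum_congr rfl fun i _ => (Finset.sum_coe_sort (s i) id).trans (hs i).2.2
  exact ⟨_, hsum ▸ hl, hsum ▸ hr⟩

theorem exists_traceFrame {A : Type u} [NonUnitalRing A] [Module ℂ A] [SMulCommClass ℂ A A]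
    [IsScalarTower ℂ A A] (hA : IsAUF A) {e : A} (hgen : IsGenIdem A e) :
    ∃ J : Type u, Nonempty (TraceFrame e J) := by
  obtain ⟨I, E, hidem, horth, hfin, hspan⟩ := hA
  choose s hs using fun i => have := hfin i i; exists_isPrimDecomposition (hidem i)
  choose u v hfactor using fun j : (Σ i, s i) => hgen.exists_factor ((hs j.1).1 _ j.2.2)
  exact ⟨Σ i, s i, ⟨{
    P := fun j : (Σ i, s i) => (j.2 : A)
    u := u
    v := v
    pairwise_mul_eq_zero := pairwise_mul_eq_zero_sigma horth hs
    exists_local_unit :=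
      exists_local_unit_sigma (exists_local_unit_of_iSup_eq_top hidem horth hspan) hs
    u_mul_v := fun j => (hfactor j).1
    P_mul_u := fun j => (hfactor j).2.1
    v_mul_P := fun j => (hfactor j).2.2.1
    u_mul_e := fun j => (hfactor j).2.2.2.1
    e_mul_v := fun j => (hfactor j).2.2.2.2 }⟩⟩

end Frame

section Corner

variable {A : Type*} [NonUnitalRing A] [Module ℂ A] [SMulCommClass ℂ A A] [IsScalarTower ℂ A A]
  {e : A}

lemma mul_mem_subCorner (he : IsIdem A e) {x y : A} (hx : x ∈ subCorner A e e)
    (hy : y ∈ subCorner A e e) : x * y ∈ subCorner A e e := by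
  show e * (x * y) * e = x * y
  rw [← mul_assoc, he.mul_eq_self_of_corner hx, mul_assoc, he.corner_mul_eq_self hy]

def cornerCompress (he : IsIdem A e) : A →ₗ[ℂ] subCorner A e e :=
  (LinearMap.mulLeftRight ℂ (e, e)).codRestrict _ fun x =>
    show e * (e * x * e) * e = e * x * e by rw [← mul_assoc, ← mul_assoc, he, mul_assoc, he]

lemma cornerCompress_of_mem (he : IsIdem A e) {x : A} (hx : x ∈ subCorner A e e) :
    cornerCompress he x = ⟨x, hx⟩ :=
  Subtype.ext hx

end Corner

/-- If `A` is AUF and `e` is a generating idempotent, then restriction to the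
corner `eAe` is a ℂ-linear bijection `SLF(A) ≃ SLF(eAe)`. -/
theorem stmt_13 {A : Type u} [NonUnitalRing A] [Module ℂ A] [SMulCommClass ℂ A A]
    [IsScalarTower ℂ A A] (hA : IsAUF A) (e : A) (hgen : IsGenIdem A e) :
    -- restriction is injective on symmetric linear functionals
    (∀ ψ₁ ψ₂ : A →ₗ[ℂ] ℂ, IsSLF A ψ₁ → IsSLF A ψ₂ →
      (∀ x ∈ subCorner A e e, ψ₁ x = ψ₂ x) → ψ₁ = ψ₂) ∧
    -- restriction is surjective onto symmetric linear functionals of eAe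
    (∀ φ : ↥(subCorner A e e) →ₗ[ℂ] ℂ,
      (∀ (x y : A) (hx : x ∈ subCorner A e e) (hy : y ∈ subCorner A e e)
        (hxy : x * y ∈ subCorner A e e) (hyx : y * x ∈ subCorner A e e),
          φ ⟨x * y, hxy⟩ = φ ⟨y * x, hyx⟩) →
      ∃ ψ : A →ₗ[ℂ] ℂ, IsSLF A ψ ∧ ∀ (x : A) (hx : x ∈ subCorner A e e), ψ x = φ ⟨x, hx⟩) := by
  obtain ⟨J, ⟨F⟩⟩ := exists_traceFrame hA hgen
  refine ⟨fun ψ₁ ψ₂ h₁ h₂ hagree => ?_, fun φ hφ => ?_⟩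
  · rw [← F.traceExtension_eq_self h₁, ← F.traceExtension_eq_self h₂]
    exact F.traceExtension_congr hagree
  · have he := hgen.1
    have hθ : ∀ a b, e * a * e = a → e * b * e = b →
        (φ ∘ₗ cornerCompress he) (a * b) = (φ ∘ₗ cornerCompress he) (b * a) := fun a b ha hb => by
      simp only [LinearMap.comp_apply, cornerCompress_of_mem he (mul_mem_subCorner he ha hb),
        cornerCompress_of_mem he (mul_mem_subCorner he hb ha)]
      exact hφ a b ha hb _ _
    refine ⟨F.traceExtension (φ ∘ₗ cornerCompress he), F.traceExtension_mul_comm hθ,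
      fun x hx => ?_⟩
    rw [F.traceExtension_apply_of_corner he hθ hx, LinearMap.comp_apply,
      cornerCompress_of_mem he hx]
end
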